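/- arXiv:1410.8802 — 4 statements merged into one kernel-verified Lean document; each statement's English description precedes it below -/
import Mathlib

section
/- Let F be a linear subspace of ℝ^d, let x, y ∈ ℝ^d be distinct points, and let z be a point on the line through x and y with ‖x - z‖ ≤ k·‖x - y‖ for some real k ≥ 1. Then dist(z, F)² ≤ 9k² · max(dist(x,F)², dist(y,F)²). -/
/-!
The distance to a linear subspace `F` is the quotient seminorm on `E ⧸ F`, so it is convex
along lines: writing `z = (1 - t) • x + t • y`, the triangle inequality in the quotient gives
`dist(z, F) ≤ |1 - t| dist(x, F) + |t| dist(y, F) ≤ (1 + 2|t|) max(dist(x, F), dist(y, F))`,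
and `‖x - z‖ = |t| ‖x - y‖` turns the hypothesis into `|t| ≤ k`, whence `1 + 2|t| ≤ 3k`.
-/

open Metric

theorem Submodule.Quotient.norm_mk_eq_infDist {E : Type*} [SeminormedAddCommGroup E]
    [Module ℝ E] (F : Submodule ℝ E) (v : E) :
    ‖(Submodule.Quotient.mk v : E ⧸ F)‖ = infDist v F :=
  QuotientAddGroup.norm_mk v

theorem infDist_add_smul_sub_le {E : Type*} [SeminormedAddCommGroup E] [NormedSpace ℝ E]
    (F : Submodule ℝ E) (x y : E) (t : ℝ) :
    infDist (x + t • (y - x)) F ≤ |1 - t| * infDist x F + |t| * infDist y F := by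
  simp only [← Submodule.Quotient.norm_mk_eq_infDist, ← Real.norm_eq_abs]
  have hcomb : x + t • (y - x) = (1 - t) • x + t • y := by module
  rw [hcomb, Submodule.Quotient.mk_add, Submodule.Quotient.mk_smul, Submodule.Quotient.mk_smul,
    ← norm_smul, ← norm_smul]
  exact norm_add_le _ _

theorem abs_le_of_norm_smul_le {E : Type*} [SeminormedAddCommGroup E] [NormedSpace ℝ E]
    {v : E} (hv : ‖v‖ ≠ 0) {t k : ℝ} (h : ‖t • v‖ ≤ k * ‖v‖) : |t| ≤ k := by
  rw [norm_smul, Real.norm_eq_abs] at h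
  exact le_of_mul_le_mul_right h ((norm_nonneg v).lt_of_ne' hv)

theorem max_sq_le_max_sq (a b : ℝ) : max a b ^ 2 ≤ max (a ^ 2) (b ^ 2) := by
  rcases max_choice a b with hab | hab <;> rw [hab]
  · exact le_max_left _ _
  · exact le_max_right _ _

theorem sq_dist_on_line_bound {d : ℕ}
    (F : Submodule ℝ (EuclideanSpace ℝ (Fin d)))
    (x y z : EuclideanSpace ℝ (Fin d)) (hxy : x ≠ y)
    (t : ℝ) (hz : z = x + t • (y - x))
    (k : ℝ) (hk : 1 ≤ k) (hnear : ‖x - z‖ ≤ k * ‖x - y‖) :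
    infDist z (F : Set (EuclideanSpace ℝ (Fin d))) ^ 2 ≤
      9 * k ^ 2 * max (infDist x (F : Set (EuclideanSpace ℝ (Fin d))) ^ 2)
        (infDist y (F : Set (EuclideanSpace ℝ (Fin d))) ^ 2) := by
  set a := infDist x (F : Set (EuclideanSpace ℝ (Fin d)))
  set b := infDist y (F : Set (EuclideanSpace ℝ (Fin d)))
  have hxz : x - z = t • (x - y) := by rw [hz]; module
  have ht : |t| ≤ k :=
    abs_le_of_norm_smul_le (norm_ne_zero_iff.mpr (sub_ne_zero.mpr hxy)) (hxz ▸ hnear)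
  have hM : 0 ≤ max a b := le_max_of_le_left infDist_nonneg
  have h1t : |1 - t| ≤ 1 + |t| := by simpa using abs_sub (1 : ℝ) t
  have hdist : infDist z F ≤ 3 * k * max a b :=
    calc infDist z F ≤ |1 - t| * a + |t| * b := hz ▸ infDist_add_smul_sub_le F x y t
      _ ≤ (1 + |t|) * max a b + |t| * max a b := by
          gcongr
          exacts [infDist_nonneg, le_max_left a b, le_max_right a b]
      _ = (1 + 2 * |t|) * max a b := by ring
      _ ≤ 3 * k * max a b := by gcongr; linarith
  calc infDist z F ^ 2 ≤ (3 * k * max a b) ^ 2 := pow_le_pow_left₀ infDist_nonneg hdist 2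
    _ = 9 * k ^ 2 * max a b ^ 2 := by ring
    _ ≤ 9 * k ^ 2 * max (a ^ 2) (b ^ 2) := by gcongr; exact max_sq_le_max_sq a b
end

section
/- Let F be a linear subspace of ℝ^d, let P be a finite set of points in ℝ^d, let P' be the orthogonal projection of P onto F, and let G be a linear subspace contained in F. Then the fitting cost satisfies cost(P, G) = cost(P, F) + cost(P', G), where cost(S, H) = Σ_{p ∈ S} dist(p, H)². In particular, minimizing cost(P', G) over k-dimensional subspaces G ⊆ F also minimizes cost(P, G) over such subspaces. -/
open Metric Finset

/-! For `G ≤ F` the residual `x - π_G x` is the sum of `x - π_F x ∈ Fᗮ` and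
`π_F x - π_G x ∈ F`, since `π_G ∘ π_F = π_G`; Pythagoras therefore splits `dist(x, G)²` into
`dist(x, F)² + dist(π_F x, G)²`. Summed over `P`, the cost of `G` differs from the cost of `G` on
the projected points by `cost(P, F)`, which does not depend on `G`, so minimizers over subspaces
of `F` coincide. -/

namespace Submodule

variable {𝕜 E : Type*} [RCLike 𝕜] [NormedAddCommGroup E] [InnerProductSpace 𝕜 E]

theorem infDist_eq_norm_sub_starProjection (K : Submodule 𝕜 E) [K.HasOrthogonalProjection]
    (x : E) : infDist x (K : Set E) = ‖x - K.starProjection x‖ := by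
  rw [starProjection_minimal, infDist_eq_iInf]
  simp only [dist_eq_norm]
  rfl

theorem starProjection_starProjection_of_le {U V : Submodule 𝕜 E}
    [U.HasOrthogonalProjection] [V.HasOrthogonalProjection] (h : U ≤ V) (x : E) :
    U.starProjection (V.starProjection x) = U.starProjection x :=
  congrArg Subtype.val (orthogonalProjectionOnto_starProjection_of_le h x)

theorem infDist_sq_eq_add_infDist_starProjection_sq {G F : Submodule 𝕜 E}
    [G.HasOrthogonalProjection] [F.HasOrthogonalProjection] (hGF : G ≤ F) (x : E) :
    infDist x (G : Set E) ^ 2 =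
      infDist x (F : Set E) ^ 2 + infDist (F.starProjection x) (G : Set E) ^ 2 := by
  simp only [infDist_eq_norm_sub_starProjection, starProjection_starProjection_of_le hGF, sq]
  have hsplit : x - G.starProjection x =
      (x - F.starProjection x) + (F.starProjection x - G.starProjection x) := by abel
  rw [hsplit]
  refine norm_add_sq_eq_norm_sq_add_norm_sq_of_inner_eq_zero (𝕜 := 𝕜) _ _ ?_
  exact F.starProjection_inner_eq_zero x _
    (F.sub_mem (F.starProjection_apply_mem x) (hGF (G.starProjection_apply_mem x)))

end Submodule

theorem cost_split_along_subspace {d k : ℕ}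
    (F : Submodule ℝ (EuclideanSpace ℝ (Fin d)))
    (P : Finset (EuclideanSpace ℝ (Fin d)))
    (G : Submodule ℝ (EuclideanSpace ℝ (Fin d))) (hGF : G ≤ F) :
    (∑ p ∈ P, infDist p (G : Set (EuclideanSpace ℝ (Fin d))) ^ 2 =
      ∑ p ∈ P, infDist p (F : Set (EuclideanSpace ℝ (Fin d))) ^ 2 +
        ∑ p ∈ P, infDist ((Submodule.orthogonalProjectionOnto F p : EuclideanSpace ℝ (Fin d)))
          (G : Set (EuclideanSpace ℝ (Fin d))) ^ 2) ∧
    ((Module.finrank ℝ G = k →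
      (∀ H : Submodule ℝ (EuclideanSpace ℝ (Fin d)), H ≤ F → Module.finrank ℝ H = k →
        ∑ p ∈ P, infDist ((Submodule.orthogonalProjectionOnto F p : EuclideanSpace ℝ (Fin d)))
            (G : Set (EuclideanSpace ℝ (Fin d))) ^ 2 ≤
          ∑ p ∈ P, infDist ((Submodule.orthogonalProjectionOnto F p : EuclideanSpace ℝ (Fin d)))
            (H : Set (EuclideanSpace ℝ (Fin d))) ^ 2) →
      (∀ H : Submodule ℝ (EuclideanSpace ℝ (Fin d)), H ≤ F → Module.finrank ℝ H = k →
        ∑ p ∈ P, infDist p (G : Set (EuclideanSpace ℝ (Fin d))) ^ 2 ≤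
          ∑ p ∈ P, infDist p (H : Set (EuclideanSpace ℝ (Fin d))) ^ 2))) := by
  have cost_split : ∀ H : Submodule ℝ (EuclideanSpace ℝ (Fin d)), H ≤ F →
      ∑ p ∈ P, infDist p (H : Set (EuclideanSpace ℝ (Fin d))) ^ 2 =
        ∑ p ∈ P, infDist p (F : Set (EuclideanSpace ℝ (Fin d))) ^ 2 +
          ∑ p ∈ P, infDist (F.starProjection p) (H : Set (EuclideanSpace ℝ (Fin d))) ^ 2 :=
    fun H hHF => by
      rw [← sum_add_distrib]
      exact sum_congr rfl fun p _ => Submodule.infDist_sq_eq_add_infDist_starProjection_sq hHF p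
  refine ⟨cost_split G hGF, fun _ hGmin H hHF hHk => ?_⟩
  rw [cost_split G hGF, cost_split H hHF]
  exact add_le_add_right (hGmin H hHF hHk) _
end

section
/- Let P be a finite set of n points in ℝ^d, let F be a linear subspace of ℝ^d, and suppose cost(P, F) ≤ c · opt_k(P) for some constant c ≥ 1, where opt_k(P) is the minimum of cost(P, H) over all k-dimensional linear subspaces H. Then there exists a k-dimensional linear subspace G contained in F with cost(P, G) ≤ 5c · opt_k(P). -/
/-! Project an optimal `k`-subspace `H` orthogonally into `F` and enlarge the image, inside `F`,
to a `k`-subspace `G`. Projection onto `F` is 1-Lipschitz, so `dist(p, G) ≤ dist(p, F) + dist(p, H)`,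
whence `cost(P, G) ≤ 2 cost(P, F) + 2 cost(P, H) ≤ 2c·opt + 2·opt ≤ 4c·opt`. -/

open Metric Finset

theorem Submodule.exists_le_le_finrank_eq {K V : Type*} [DivisionRing K] [AddCommGroup V]
    [Module K V] [FiniteDimensional K V] {W F : Submodule K V} (hWF : W ≤ F) {k : ℕ}
    (hWk : Module.finrank K W ≤ k) (hkF : k ≤ Module.finrank K F) :
    ∃ G : Submodule K V, W ≤ G ∧ G ≤ F ∧ Module.finrank K G = k := by
  induction k, hWk using Nat.le_induction with
  | base => exact ⟨W, le_rfl, hWF, rfl⟩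
  | succ k _ ih =>
    obtain ⟨G, hWG, hGF, hGk⟩ := ih (by omega)
    obtain ⟨x, hxF, hxG⟩ : ∃ x ∈ F, x ∉ G :=
      SetLike.exists_of_lt (lt_of_le_of_ne hGF (by rintro rfl; omega))
    refine ⟨G ⊔ K ∙ x, le_sup_of_le_left hWG, sup_le hGF ?_, ?_⟩
    · exact (Submodule.span_singleton_le_iff_mem x F).2 hxF
    · rw [Submodule.finrank_sup_span_singleton hxG, hGk]

theorem Metric.infDist_le_dist_add_infDist_of_mapsTo {α : Type*} [PseudoMetricSpace α]
    {f : α → α} (hf : LipschitzWith 1 f) {s t : Set α} (hs : s.Nonempty)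
    (hst : Set.MapsTo f s t) (x : α) :
    infDist x t ≤ dist x (f x) + infDist x s := by
  rw [← sub_le_iff_le_add', le_infDist hs]
  intro y hy
  calc infDist x t - dist x (f x) ≤ dist x (f y) - dist x (f x) := by
        gcongr; exact infDist_le_dist_of_mem (hst hy)
    _ ≤ dist (f x) (f y) := by linarith [dist_triangle x (f x) (f y)]
    _ ≤ dist x y := by simpa using hf.dist_le_mul x y

theorem Submodule.infDist_eq_dist_starProjection {𝕜 E : Type*} [RCLike 𝕜]
    [NormedAddCommGroup E] [InnerProductSpace 𝕜 E] (K : Submodule 𝕜 E)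
    [K.HasOrthogonalProjection] (x : E) :
    infDist x K = dist x (K.starProjection x) := by
  refine le_antisymm (infDist_le_dist_of_mem (K.starProjection_apply_mem x)) ?_
  rw [le_infDist ⟨0, K.zero_mem⟩]
  intro y hy
  rw [dist_eq_norm, dist_eq_norm, Submodule.starProjection_minimal]
  exact ciInf_le ⟨0, Set.forall_mem_range.2 fun _ => norm_nonneg _⟩ (⟨y, hy⟩ : K)

theorem Submodule.infDist_le_infDist_add_infDist_of_map_starProjection_le {𝕜 E : Type*}
    [RCLike 𝕜] [NormedAddCommGroup E] [InnerProductSpace 𝕜 E] (K : Submodule 𝕜 E)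
    [K.HasOrthogonalProjection] {H G : Submodule 𝕜 E}
    (hHG : H.map K.starProjection.toLinearMap ≤ G) (x : E) :
    infDist x G ≤ infDist x K + infDist x H := by
  rw [K.infDist_eq_dist_starProjection]
  exact infDist_le_dist_add_infDist_of_mapsTo K.lipschitzWith_starProjection
    ⟨0, H.zero_mem⟩ (fun y hy => hHG ⟨y, hy, rfl⟩) x

theorem Finset.sum_sq_le_two_mul_add_of_le_add {ι : Type*} (s : Finset ι) {f g h : ι → ℝ}
    (hf : ∀ i ∈ s, 0 ≤ f i) (hfgh : ∀ i ∈ s, f i ≤ g i + h i) :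
    ∑ i ∈ s, f i ^ 2 ≤ 2 * (∑ i ∈ s, g i ^ 2 + ∑ i ∈ s, h i ^ 2) := by
  rw [← sum_add_distrib, mul_sum]
  refine sum_le_sum fun i hi => ?_
  calc f i ^ 2 ≤ (g i + h i) ^ 2 := pow_le_pow_left₀ (hf i hi) (hfgh i hi) 2
    _ ≤ 2 * (g i ^ 2 + h i ^ 2) := add_sq_le

theorem exists_good_k_flat_inside_general {d k : ℕ}
    (P : Finset (EuclideanSpace ℝ (Fin d)))
    (F : Submodule ℝ (EuclideanSpace ℝ (Fin d)))
    (hF : k ≤ Module.finrank ℝ F)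
    (opt : ℝ)
    (hopt : IsLeast {x : ℝ | ∃ H : Submodule ℝ (EuclideanSpace ℝ (Fin d)),
      Module.finrank ℝ H = k ∧
        x = ∑ p ∈ P, infDist p (H : Set (EuclideanSpace ℝ (Fin d))) ^ 2} opt)
    (c : ℝ) (hc : 1 ≤ c)
    (hcost : ∑ p ∈ P, infDist p (F : Set (EuclideanSpace ℝ (Fin d))) ^ 2 ≤ c * opt) :
    ∃ G : Submodule ℝ (EuclideanSpace ℝ (Fin d)), G ≤ F ∧ Module.finrank ℝ G = k ∧
      ∑ p ∈ P, infDist p (G : Set (EuclideanSpace ℝ (Fin d))) ^ 2 ≤ 5 * c * opt := by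
  obtain ⟨H, hHk, hHopt⟩ := hopt.1
  set W := H.map F.starProjection.toLinearMap
  have hWF : W ≤ F := by
    rintro _ ⟨y, -, rfl⟩
    exact F.starProjection_apply_mem y
  have hWk : Module.finrank ℝ W ≤ k := hHk ▸ Submodule.finrank_map_le _ H
  obtain ⟨G, hWG, hGF, hGk⟩ := Submodule.exists_le_le_finrank_eq hWF hWk hF
  refine ⟨G, hGF, hGk, ?_⟩
  have hopt_nonneg : 0 ≤ opt := hHopt ▸ sum_nonneg fun p _ => sq_nonneg _
  calc ∑ p ∈ P, infDist p (G : Set (EuclideanSpace ℝ (Fin d))) ^ 2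
      ≤ 2 * (∑ p ∈ P, infDist p (F : Set (EuclideanSpace ℝ (Fin d))) ^ 2 +
          ∑ p ∈ P, infDist p (H : Set (EuclideanSpace ℝ (Fin d))) ^ 2) :=
        P.sum_sq_le_two_mul_add_of_le_add (fun _ _ => infDist_nonneg) fun p _ =>
          F.infDist_le_infDist_add_infDist_of_map_starProjection_le hWG p
    _ ≤ 2 * (c * opt + opt) := by rw [← hHopt]; gcongr
    _ ≤ 5 * c * opt := by nlinarith

theorem exists_good_k_flat_inside {d k : ℕ} (hkd : k ≤ d)
    (P : Finset (EuclideanSpace ℝ (Fin d)))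
    (F : Submodule ℝ (EuclideanSpace ℝ (Fin d)))
    (hF : k ≤ Module.finrank ℝ F)
    (opt : ℝ)
    (hopt : IsLeast {x : ℝ | ∃ H : Submodule ℝ (EuclideanSpace ℝ (Fin d)),
      Module.finrank ℝ H = k ∧
        x = ∑ p ∈ P, infDist p (H : Set (EuclideanSpace ℝ (Fin d))) ^ 2} opt)
    (c : ℝ) (hc : 1 ≤ c)
    (hcost : ∑ p ∈ P, infDist p (F : Set (EuclideanSpace ℝ (Fin d))) ^ 2 ≤ c * opt) :
    ∃ G : Submodule ℝ (EuclideanSpace ℝ (Fin d)), G ≤ F ∧ Module.finrank ℝ G = k ∧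
      ∑ p ∈ P, infDist p (G : Set (EuclideanSpace ℝ (Fin d))) ^ 2 ≤ 5 * c * opt :=
  exists_good_k_flat_inside_general P F hF opt hopt c hc hcost
end

section
/- Let F and F_opt be linear subspaces of ℝ^d, let P be a finite set of points, and let P' be the orthogonal projection of P onto F. Then cost(P', F_opt) ≤ 2(cost(P, F) + cost(P, F_opt)). -/
open Metric Finset

theorem Metric.infDist_sq_le_two_mul_add {α : Type*} [PseudoMetricSpace α] (x y : α) (s : Set α) :
    infDist y s ^ 2 ≤ 2 * (dist x y ^ 2 + infDist x s ^ 2) :=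
  calc infDist y s ^ 2 ≤ (dist x y + infDist x s) ^ 2 := by
        gcongr
        · exact infDist_nonneg
        · rw [add_comm, dist_comm]; exact infDist_le_infDist_add_dist
    _ ≤ 2 * (dist x y ^ 2 + infDist x s ^ 2) := add_sq_le

theorem projected_cost_bound {d : ℕ}
    (F Fopt : Submodule ℝ (EuclideanSpace ℝ (Fin d)))
    (P : Finset (EuclideanSpace ℝ (Fin d))) :
    ∑ p ∈ P, infDist ((Submodule.orthogonalProjectionOnto F p : EuclideanSpace ℝ (Fin d)))
        (Fopt : Set (EuclideanSpace ℝ (Fin d))) ^ 2 ≤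
      2 * (∑ p ∈ P, infDist p (F : Set (EuclideanSpace ℝ (Fin d))) ^ 2 +
        ∑ p ∈ P, infDist p (Fopt : Set (EuclideanSpace ℝ (Fin d))) ^ 2) := by
  rw [← sum_add_distrib, mul_sum]
  refine sum_le_sum fun p _ => ?_
  rw [Submodule.coe_orthogonalProjectionOnto_apply, F.infDist_eq_dist_starProjection]
  exact infDist_sq_le_two_mul_add p _ _
end
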